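/- Let μ be a probability measure on ℝ^d, let u ∈ ℝ^d be a unit vector, and let Ω be a measurable set such that ⟨u, x⟩ > 0 for μ-a.e. x ∈ Ω. Suppose there is a constant C_p > 0 such that for all t ≥ 0, μ(Ω ∩ {x : ⟨u, x⟩ < t}) ≤ C_p · t. Then ∫_Ω ⟨u, x⟩ dμ(x) ≥ μ(Ω)² / (2 C_p). -/

import Mathlib

/-!
By the layer-cake formula `∫ f = ∫_{t > 0} ν {t ≤ f}`. The slab bound gives
`ν {t ≤ f} ≥ M - C t` with `M = ν univ`, and integrating this lower bound over `0 < t ≤ M / C`,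
where it is nonnegative, yields `M² / (2C)`.
-/

open MeasureTheory Set
open scoped RealInnerProductSpace

theorem integral_Ioc_sub_mul (M C T : ℝ) (hT : 0 ≤ T) :
    ∫ t in Ioc 0 T, (M - C * t) = M * T - C * T ^ 2 / 2 := by
  rw [← intervalIntegral.integral_of_le hT, intervalIntegral.integral_sub intervalIntegrable_const
    ((continuous_const_mul C).intervalIntegrable _ _), intervalIntegral.integral_const,
    intervalIntegral.integral_const_mul, integral_id]
  simp only [sub_zero, smul_eq_mul]
  ring

section

variable {α : Type*} [MeasurableSpace α] {ν : Measure α} [IsFiniteMeasure ν] {f : α → ℝ}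

theorem measureReal_univ_sub_le_measureReal_le {C : ℝ}
    (hslab : ∀ t, 0 ≤ t → ν.real {x | f x < t} ≤ C * t) {t : ℝ} (ht : 0 ≤ t) :
    ν.real univ - C * t ≤ ν.real {x | t ≤ f x} := by
  have hcover : ν.real univ ≤ ν.real {x | f x < t} + ν.real {x | t ≤ f x} :=
    calc ν.real univ ≤ ν.real ({x | f x < t} ∪ {x | t ≤ f x}) :=
          measureReal_mono fun x _ => lt_or_ge (f x) t
      _ ≤ _ := measureReal_union_le _ _
  linarith [hslab t ht]

theorem sq_measureReal_univ_div_le_integral_of_measureReal_lt_le (hf : Integrable f ν)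
    (hf0 : 0 ≤ᵐ[ν] f) {C : ℝ} (hC : 0 < C)
    (hslab : ∀ t, 0 ≤ t → ν.real {x | f x < t} ≤ C * t) :
    ν.real univ ^ 2 / (2 * C) ≤ ∫ x, f x ∂ν := by
  set M := ν.real univ
  set T := M / C with hT_def
  have hT : 0 ≤ T := div_nonneg measureReal_nonneg hC.le
  have hlower_int : IntegrableOn (fun t => M - C * t) (Ioc 0 T) :=
    (continuous_const.sub (continuous_const_mul C)).integrableOn_Ioc
  have hlower_nonneg : 0 ≤ᵐ[volume.restrict (Ioc 0 T)] fun t => M - C * t := by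
    refine (ae_restrict_iff' measurableSet_Ioc).2 (Filter.Eventually.of_forall fun t ht => ?_)
    exact sub_nonneg.2 ((le_div_iff₀' hC).1 ht.2)
  have hlower (t : ℝ) (ht : t ∈ Ioc 0 T) : ENNReal.ofReal (M - C * t) ≤ ν {x | t ≤ f x} :=
    (ENNReal.ofReal_le_iff_le_toReal (measure_ne_top _ _)).2
      (measureReal_univ_sub_le_measureReal_le hslab ht.1.le)
  have hlintegral : ENNReal.ofReal (M ^ 2 / (2 * C)) ≤ ∫⁻ x, ENNReal.ofReal (f x) ∂ν :=
    calc ENNReal.ofReal (M ^ 2 / (2 * C)) = ENNReal.ofReal (∫ t in Ioc 0 T, (M - C * t)) := by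
          rw [integral_Ioc_sub_mul M C T hT, hT_def]
          congr 1
          field_simp
          ring
      _ = ∫⁻ t in Ioc 0 T, ENNReal.ofReal (M - C * t) :=
          ofReal_integral_eq_lintegral_ofReal hlower_int hlower_nonneg
      _ ≤ ∫⁻ t in Ioc 0 T, ν {x | t ≤ f x} := setLIntegral_mono' measurableSet_Ioc hlower
      _ ≤ ∫⁻ t in Ioi 0, ν {x | t ≤ f x} := lintegral_mono_set Ioc_subset_Ioi_self
      _ = ∫⁻ x, ENNReal.ofReal (f x) ∂ν :=
          (lintegral_eq_lintegral_meas_le ν hf0 hf.aemeasurable).symm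
  rw [integral_eq_lintegral_of_nonneg_ae hf0 hf.aestronglyMeasurable]
  exact (ENNReal.ofReal_le_iff_le_toReal hf.lintegral_lt_top.ne).1 hlintegral

end

theorem stmt_7_general (d : ℕ) (μ : Measure (EuclideanSpace ℝ (Fin d))) [IsProbabilityMeasure μ]
    (u : EuclideanSpace ℝ (Fin d))
    (Ω : Set (EuclideanSpace ℝ (Fin d))) (hΩ : MeasurableSet Ω)
    (hpos : ∀ᵐ x ∂μ, x ∈ Ω → 0 < ⟪u, x⟫)
    (Cp : ℝ) (hCp : 0 < Cp)
    (hslab : ∀ t : ℝ, 0 ≤ t → (μ (Ω ∩ {x | ⟪u, x⟫ < t})).toReal ≤ Cp * t)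
    (hint : IntegrableOn (fun x => ⟪u, x⟫) Ω μ) :
    (μ Ω).toReal ^ 2 / (2 * Cp) ≤ ∫ x in Ω, ⟪u, x⟫ ∂μ := by
  have hnonneg : 0 ≤ᵐ[μ.restrict Ω] fun x => ⟪u, x⟫ :=
    (ae_restrict_iff' hΩ).2 (hpos.mono fun _ hx hxΩ => (hx hxΩ).le)
  have hslab' (t : ℝ) (ht : 0 ≤ t) : (μ.restrict Ω).real {x | ⟪u, x⟫ < t} ≤ Cp * t := by
    rw [measureReal_restrict_apply' hΩ, inter_comm]
    exact hslab t ht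
  have := sq_measureReal_univ_div_le_integral_of_measureReal_lt_le hint hnonneg hCp hslab'
  rwa [measureReal_restrict_apply_univ] at this

theorem stmt_7 (d : ℕ) (μ : Measure (EuclideanSpace ℝ (Fin d))) [IsProbabilityMeasure μ]
    (u : EuclideanSpace ℝ (Fin d)) (hu : ‖u‖ = 1)
    (Ω : Set (EuclideanSpace ℝ (Fin d))) (hΩ : MeasurableSet Ω)
    (hpos : ∀ᵐ x ∂μ, x ∈ Ω → 0 < ⟪u, x⟫)
    (Cp : ℝ) (hCp : 0 < Cp)
    (hslab : ∀ t : ℝ, 0 ≤ t → (μ (Ω ∩ {x | ⟪u, x⟫ < t})).toReal ≤ Cp * t)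
    (hint : IntegrableOn (fun x => ⟪u, x⟫) Ω μ) :
    (μ Ω).toReal ^ 2 / (2 * Cp) ≤ ∫ x in Ω, ⟪u, x⟫ ∂μ :=
  stmt_7_general d μ u Ω hΩ hpos Cp hCp hslab hint
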